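/- Let E be a 2×2 complex positive semidefinite matrix (with entries a_{ij}) such that ⟨ψ_k| (E ⊗ I₂) |ψ_l⟩ = 0 for all k ≠ l, where |ψ₁⟩ = |00⟩+|11⟩, |ψ₂⟩ = |00⟩−|11⟩, |ψ₃⟩ = |01⟩+|10⟩, |ψ₄⟩ = |01⟩−|10⟩ are the Bell states. Then E is a scalar multiple of the identity matrix. -/
import Mathlib


open Finset
open scoped ComplexOrder

/-- standard basis vector `e_i ⊗ e_j` of `ℂ² ⊗ ℂ²`. -/
def ket2 (i j : Fin 2) : Fin 2 × Fin 2 → ℂ := fun p => if p = (i, j) then 1 else 0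

/-- the four unnormalized Bell states. -/
def bell : Fin 4 → (Fin 2 × Fin 2 → ℂ)
  | 0 => ket2 0 0 + ket2 1 1
  | 1 => ket2 0 0 - ket2 1 1
  | 2 => ket2 0 1 + ket2 1 0
  | 3 => ket2 0 1 - ket2 1 0

/-- `(E ⊗ I₂) v` for `E` acting on the first tensor factor. -/
noncomputable def actFirst (E : Matrix (Fin 2) (Fin 2) ℂ) (v : Fin 2 × Fin 2 → ℂ) :
    Fin 2 × Fin 2 → ℂ := fun p => ∑ i : Fin 2, E p.1 i * v (i, p.2)

theorem bell_first_party_povm_trivial (E : Matrix (Fin 2) (Fin 2) ℂ)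
    (hE : E.PosSemidef)
    (h : ∀ k l : Fin 4, k ≠ l →
      ∑ p : Fin 2 × Fin 2, (starRingEnd ℂ) (bell k p) * actFirst E (bell l) p = 0) :
    ∃ c : ℂ, E = c • (1 : Matrix (Fin 2) (Fin 2) ℂ) := by
  have h01 := h 0 1 (by decide)
  have h02 := h 0 2 (by decide)
  have h03 := h 0 3 (by decide)
  simp only [bell, ket2, actFirst, Fintype.sum_prod_type, Fin.sum_univ_two,
    Pi.add_apply, Pi.sub_apply, Prod.mk.injEq] at h01 h02 h03
  norm_num at h01 h02 h03
  refine ⟨E 0 0, ?_⟩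
  ext i j
  fin_cases i <;> fin_cases j <;>
    simp [Matrix.one_apply] <;> first | linear_combination (h02 - h03)/2 | linear_combination (h02 + h03)/2 | linear_combination -h01
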